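/- Let n ≥ 5 and let S be a triangulation of a convex n-gon containing the diagonal (2,n) (with vertices labeled 1,…,n). Let Δ be the fan triangulation {(1,i) : 3 ≤ i ≤ n−1}. Then every triangulation T disjoint from S containing exactly d diagonals of the form (1,i) is connected to Δ in the flip graph of triangulations disjoint from S by a path of length at most n−3−d, where each flip along the path produces a triangulation still disjoint from S. -/

import Mathlib

/-- A diagonal of the convex `n`-gon: an unordered pair of distinct,
non-adjacent vertices (vertices labeled by `Fin n` in cyclic order). -/
def IsDiag (n : ℕ) (d : Sym2 (Fin n)) : Prop :=
  ∃ a b : Fin n, d = s(a, b) ∧ a ≠ b ∧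
    (a.val + 1) % n ≠ b.val ∧ (b.val + 1) % n ≠ a.val

/-- Two diagonals of the convex `n`-gon cross (their endpoints strictly
interleave around the polygon). -/
def Crosses (n : ℕ) (d e : Sym2 (Fin n)) : Prop :=
  (∃ a b c c' : Fin n, d = s(a, b) ∧ e = s(c, c') ∧ a < c ∧ c < b ∧ b < c') ∨
  (∃ a b c c' : Fin n, e = s(a, b) ∧ d = s(c, c') ∧ a < c ∧ c < b ∧ b < c')

/-- A triangulation of the convex `n`-gon: a maximal set of pairwise
noncrossing diagonals. -/
structure Triangulation (n : ℕ) where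
  diags : Finset (Sym2 (Fin n))
  isDiag : ∀ d ∈ diags, IsDiag n d
  noncross : ∀ d ∈ diags, ∀ e ∈ diags, ¬ Crosses n d e
  maximal : ∀ d, IsDiag n d → (∀ e ∈ diags, ¬ Crosses n d e) → d ∈ diags

/-- `IsFlip T d T'` : the triangulation `T'` is obtained from `T` by flipping
the diagonal `d` (removing `d`, keeping all other diagonals, and inserting the
opposite diagonal of the resulting quadrilateral). -/
def IsFlip {n : ℕ} (T : Triangulation n) (d : Sym2 (Fin n)) (T' : Triangulation n) : Prop :=
  d ∈ T.diags ∧ d ∉ T'.diags ∧ ∀ e ∈ T.diags, e ≠ d → e ∈ T'.diags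

/-- Two triangulations are related by a single diagonal flip. -/
def FlipAdj {n : ℕ} (T T' : Triangulation n) : Prop := ∃ d, IsFlip T d T'

/-- `d'` is the new diagonal created when passing from `T` to `T'`. -/
def NewDiag {n : ℕ} (T T' : Triangulation n) (d' : Sym2 (Fin n)) : Prop :=
  d' ∈ T'.diags ∧ d' ∉ T.diags

/-- Flip of a pair of triangulations at a diagonal of the first coordinate:
flip it there, and if the new diagonal lies in the second triangulation,
flip it there as well. -/
def PairFlipFst {n : ℕ} (p q : Triangulation n × Triangulation n) : Prop :=
  ∃ d T₁' d', IsFlip p.1 d T₁' ∧ NewDiag p.1 T₁' d' ∧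
    ((d' ∉ p.2.diags ∧ q = (T₁', p.2)) ∨
     (d' ∈ p.2.diags ∧ ∃ T₂', IsFlip p.2 d' T₂' ∧ q = (T₁', T₂')))

/-- Flip of a pair of triangulations at a diagonal of the second coordinate. -/
def PairFlipSnd {n : ℕ} (p q : Triangulation n × Triangulation n) : Prop :=
  ∃ d T₂' d', IsFlip p.2 d T₂' ∧ NewDiag p.2 T₂' d' ∧
    ((d' ∉ p.1.diags ∧ q = (p.1, T₂')) ∨
     (d' ∈ p.1.diags ∧ ∃ T₁', IsFlip p.1 d' T₁' ∧ q = (T₁', T₂')))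

/-- The flip operation on ordered pairs of triangulations. -/
def PairFlip {n : ℕ} (p q : Triangulation n × Triangulation n) : Prop :=
  PairFlipFst p q ∨ PairFlipSnd p q

/-- Vertices of the flip graph `D_n`: ordered pairs of triangulations of the
convex `n`-gon sharing no diagonal. -/
def DVert (n : ℕ) := {p : Triangulation n × Triangulation n // Disjoint p.1.diags p.2.diags}

/-- The flip graph `D_n` on ordered pairs of disjoint triangulations. -/
def DGraph (n : ℕ) : SimpleGraph (DVert n) where
  Adj p q := p ≠ q ∧ (PairFlip p.1 q.1 ∨ PairFlip q.1 p.1)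
  symm := ⟨fun _ _ h => ⟨h.1.symm, h.2.symm⟩⟩
  loopless := ⟨fun _ h => h.1 rfl⟩

/-- The flip graph `T_n` on all triangulations of the convex `n`-gon. -/
def TriGraph (n : ℕ) : SimpleGraph (Triangulation n) where
  Adj T T' := T ≠ T' ∧ (FlipAdj T T' ∨ FlipAdj T' T)
  symm := ⟨fun _ _ h => ⟨h.1.symm, h.2.symm⟩⟩
  loopless := ⟨fun _ h => h.1 rfl⟩

/-- Vertices of `T_n(S)`: triangulations disjoint from `S`. -/
def TnSVert (n : ℕ) (S : Triangulation n) := {T : Triangulation n // Disjoint T.diags S.diags}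

/-- The flip graph `T_n(S)` induced on triangulations disjoint from `S`. -/
def TnS (n : ℕ) (S : Triangulation n) : SimpleGraph (TnSVert n S) where
  Adj T T' := T ≠ T' ∧ (FlipAdj T.1 T'.1 ∨ FlipAdj T'.1 T.1)
  symm := ⟨fun _ _ h => ⟨h.1.symm, h.2.symm⟩⟩
  loopless := ⟨fun _ h => h.1 rfl⟩

/-!
Vertex `0` here is the paper's vertex `1`, so `S` contains `s(1, n-1)` and every fan diagonal
`s(0, r)` with `2 ≤ r ≤ n-2` crosses it; hence adding fan diagonals never breaks disjointness
from `S`. If `T` misses the fan diagonal `s(0, j)`, let `s(0, q)` be the first side of `T` at `0`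
beyond `j`. The triangle of `T` on `s(0, q)` has its third vertex `p` before `j`, so `s(p, q)` is a
diagonal of `T`; the triangle on its other side has apex `r`, and flipping `s(p, q)` inside the
quadrilateral `0 p r q` creates the new fan diagonal `s(0, r)`. After at most `n - 3 - d` such flips
`T` contains the whole fan and therefore equals `Δ`.
-/

open Finset

variable {n : ℕ}

theorem crosses_comm {d e : Sym2 (Fin n)} (h : Crosses n d e) : Crosses n e d :=
  h.elim Or.inr Or.inl

theorem crosses_mk_of_lt {a b x y : Fin n}
    (h : (a < x ∧ x < b ∧ b < y) ∨ (x < a ∧ a < y ∧ y < b)) : Crosses n s(a, b) s(x, y) := by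
  rcases h with ⟨h₁, h₂, h₃⟩ | ⟨h₁, h₂, h₃⟩
  · exact Or.inl ⟨a, b, x, y, rfl, rfl, h₁, h₂, h₃⟩
  · exact Or.inr ⟨x, y, a, b, rfl, rfl, h₁, h₂, h₃⟩

theorem lt_of_crosses_mk {a b x y : Fin n} (h : Crosses n s(a, b) s(x, y)) (hab : a ≤ b)
    (hxy : x ≤ y) : (a < x ∧ x < b ∧ b < y) ∨ (x < a ∧ a < y ∧ y < b) := by
  rcases h with ⟨_, _, _, _, hd, he, _⟩ | ⟨_, _, _, _, he, hd, _⟩ <;>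
  · rw [Sym2.eq_iff] at hd he
    omega

theorem Fin.succ_val_mod_eq_iff {a b : Fin n} :
    (a.val + 1) % n = b.val ↔ a.val + 1 = b.val ∨ (a.val + 1 = n ∧ b.val = 0) := by
  rcases Nat.lt_or_ge (a.val + 1) n with h | h
  · rw [Nat.mod_eq_of_lt h]
    omega
  · rw [show a.val + 1 = n by omega, Nat.mod_self]
    omega

theorem isDiag_mk {x y : Fin n} (h₁ : x.val + 2 ≤ y.val) (h₂ : y.val = n - 1 → 1 ≤ x.val) :
    IsDiag n s(x, y) :=
  ⟨x, y, rfl, by omega, by rw [Ne, Fin.succ_val_mod_eq_iff]; omega,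
    by rw [Ne, Fin.succ_val_mod_eq_iff]; omega⟩

theorem IsDiag.exists_eq_mk {d : Sym2 (Fin n)} (h : IsDiag n d) :
    ∃ x y : Fin n, d = s(x, y) ∧ x.val + 2 ≤ y.val ∧ (y.val = n - 1 → 1 ≤ x.val) := by
  obtain ⟨a, b, rfl, hab, ha, hb⟩ := h
  rw [Ne, Fin.succ_val_mod_eq_iff] at ha hb
  rcases lt_or_gt_of_ne hab with h | h
  · exact ⟨a, b, rfl, by omega, by omega⟩
  · exact ⟨b, a, Sym2.eq_swap, by omega, by omega⟩

def Compatible (D : Finset (Sym2 (Fin n))) (g : Sym2 (Fin n)) : Prop :=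
  ∀ e ∈ D, ¬ Crosses n g e

def IsSide (D : Finset (Sym2 (Fin n))) (a b : Fin n) : Prop :=
  a.val + 1 = b.val ∨ (a.val = 0 ∧ b.val = n - 1) ∨ s(a, b) ∈ D

theorem compatible_mk_of_forall {D : Finset (Sym2 (Fin n))} {a b : Fin n} (hab : a < b)
    (h : ∀ x y, x < y → s(x, y) ∈ D → ¬ ((a < x ∧ x < b ∧ b < y) ∨ (x < a ∧ a < y ∧ y < b))) :
    Compatible D s(a, b) := by
  intro e he hcross
  induction e using Sym2.ind with
  | _ x y =>
  wlog hxy : x ≤ y generalizing x y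
  · rw [@Sym2.eq_swap _ x y] at he hcross
    exact this y x he hcross (le_of_not_ge hxy)
  have hlt := lt_of_crosses_mk hcross hab.le hxy
  exact h x y (by omega) he hlt

theorem IsSide.not_crosses {D : Finset (Sym2 (Fin n))} {a b : Fin n} {g : Sym2 (Fin n)}
    (h : IsSide D a b) (hg : Compatible D g) : ¬ Crosses n s(a, b) g := by
  rcases or_assoc.2 h with h | h
  · rintro (⟨_, _, _, _, hd, -, _⟩ | ⟨_, _, _, _, -, hd, _⟩) <;> rw [Sym2.eq_iff] at hd <;> omega
  · exact fun hc => hg _ h (crosses_comm hc)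

namespace Triangulation

variable (T : Triangulation n)

theorem compatible_of_mem {e : Sym2 (Fin n)} (he : e ∈ T.diags) : Compatible T.diags e :=
  T.noncross e he

theorem notMem_of_crosses {d e : Sym2 (Fin n)} (he : e ∈ T.diags) (h : Crosses n d e) :
    d ∉ T.diags :=
  fun hd => T.noncross d hd e he h

theorem eq_of_diags_subset {T₁ T₂ : Triangulation n} (h : T₁.diags ⊆ T₂.diags) : T₁ = T₂ := by
  have hdiags : T₁.diags = T₂.diags := Subset.antisymm h fun e he =>
    T₁.maximal e (T₂.isDiag e he) fun f hf => T₂.noncross e he f (h hf)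
  cases T₁
  cases T₂
  subst hdiags
  rfl

theorem exists_apex {a b : Fin n} (hab : a.val + 2 ≤ b.val) (hside : IsSide T.diags a b) :
    ∃ c, a < c ∧ c < b ∧ IsSide T.diags a c ∧ IsSide T.diags c b := by
  classical
  obtain ⟨c, hc, hmax⟩ := (univ.filter fun c : Fin n => a < c ∧ c < b ∧ IsSide T.diags a c)
    |>.exists_max_image id
      ⟨⟨a.val + 1, by omega⟩,
        mem_filter.2 ⟨mem_univ _, by simp [Fin.lt_def], by simp [Fin.lt_def]; omega, Or.inl rfl⟩⟩
  simp only [mem_filter, mem_univ, true_and] at hc hmax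
  obtain ⟨hac, hcb, hsac⟩ := hc
  refine ⟨c, hac, hcb, hsac, ?_⟩
  by_cases hcb' : c.val + 1 = b.val
  · exact Or.inl hcb'
  -- `c` is the farthest neighbour of `a` before `b`, so nothing of `T` can cross `cb`.
  refine Or.inr (Or.inr (T.maximal _ (isDiag_mk (by omega) (by omega))
    (compatible_mk_of_forall hcb ?_)))
  rintro x y hxy hmem (⟨hcx, hxb, hby⟩ | ⟨hxc, hcy, hyb⟩)
  · exact hside.not_crosses (T.compatible_of_mem hmem) (crosses_mk_of_lt (by omega))
  · rcases lt_trichotomy x a with hxa | rfl | hax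
    · exact hside.not_crosses (T.compatible_of_mem hmem) (crosses_mk_of_lt (by omega))
    · exact absurd (hmax y ⟨by omega, hyb, Or.inr (Or.inr hmem)⟩) (not_le.2 hcy)
    · exact hsac.not_crosses (T.compatible_of_mem hmem) (crosses_mk_of_lt (by omega))

/-- The triangles `abd` and `bcd` of `T`, glued along the diagonal `bd`. -/
structure IsQuad (a b c d : Fin n) : Prop where
  lt_ab : a < b
  lt_bc : b < c
  lt_cd : c < d
  side_ab : IsSide T.diags a b
  side_bc : IsSide T.diags b c
  side_cd : IsSide T.diags c d
  side_ad : IsSide T.diags a d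
  mem_bd : s(b, d) ∈ T.diags

namespace IsQuad

variable {T} {a b c d : Fin n}

theorem compatible_erase (hq : T.IsQuad a b c d) :
    Compatible (T.diags.erase s(b, d)) s(a, c) := by
  obtain ⟨hab, hbc, hcd, sab, sbc, scd, sad, -⟩ := hq
  refine compatible_mk_of_forall (hab.trans hbc) fun x y hxy hmem hcross => ?_
  obtain ⟨hne, hmem⟩ := mem_erase.1 hmem
  have key {u v : Fin n} (h : IsSide T.diags u v) : ¬ Crosses n s(u, v) s(x, y) :=
    h.not_crosses (T.compatible_of_mem hmem)
  rcases hcross with ⟨hax, hxc, hcy⟩ | ⟨hxa, hay, hyc⟩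
  · rcases lt_trichotomy x b with hxb | rfl | hbx
    · exact key sab (crosses_mk_of_lt (by omega))
    · rcases lt_trichotomy y d with hyd | rfl | hdy
      · exact key scd (crosses_mk_of_lt (by omega))
      · exact hne rfl
      · exact key sad (crosses_mk_of_lt (by omega))
    · exact key sbc (crosses_mk_of_lt (by omega))
  · rcases lt_trichotomy y b with hyb | rfl | hby
    · exact key sab (crosses_mk_of_lt (by omega))
    · exact key sad (crosses_mk_of_lt (by omega))
    · exact key sbc (crosses_mk_of_lt (by omega))

theorem mem_of_compatible (hq : T.IsQuad a b c d) {g : Sym2 (Fin n)} (hg : IsDiag n g)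
    (hcomp : Compatible (insert s(a, c) (T.diags.erase s(b, d))) g) :
    g ∈ insert s(a, c) (T.diags.erase s(b, d)) := by
  obtain ⟨hab, hbc, hcd, sab, sbc, scd, sad, -⟩ := hq
  have side {u v : Fin n} (h : IsSide T.diags u v) (hne : s(u, v) ≠ s(b, d)) :
      IsSide (insert s(a, c) (T.diags.erase s(b, d))) u v := by
    rcases h with h | h | h
    exacts [Or.inl h, Or.inr (Or.inl h),
      Or.inr (Or.inr (mem_insert_of_mem (mem_erase.2 ⟨hne, h⟩)))]
  obtain ⟨x, y, rfl, hxy, -⟩ := hg.exists_eq_mk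
  by_cases hT : Compatible T.diags s(x, y)
  · refine mem_insert_of_mem (mem_erase.2 ⟨?_, T.maximal _ hg hT⟩)
    intro h
    rw [h] at hcomp
    exact hcomp _ (mem_insert_self _ _) (crosses_mk_of_lt (by omega))
  obtain ⟨e, he, hcross⟩ : ∃ e ∈ T.diags, Crosses n s(x, y) e := by
    simpa [Compatible] using hT
  obtain rfl : e = s(b, d) := by
    by_contra hne
    exact hcomp e (mem_insert_of_mem (mem_erase.2 ⟨hne, he⟩)) hcross
  have key {u v : Fin n} (h : IsSide (insert s(a, c) (T.diags.erase s(b, d))) u v) :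
      ¬ Crosses n s(u, v) s(x, y) :=
    h.not_crosses hcomp
  rcases lt_of_crosses_mk (crosses_comm hcross) (hbc.trans hcd).le (by omega) with
    ⟨hbx, hxd, hdy⟩ | ⟨hxb, hby, hyd⟩
  · exact absurd (crosses_mk_of_lt (by omega)) (key (side sad (by simp; omega)))
  · rcases lt_trichotomy x a with hxa | rfl | hax
    · exact absurd (crosses_mk_of_lt (by omega)) (key (side sad (by simp; omega)))
    · rcases lt_trichotomy y c with hyc | rfl | hcy
      · exact absurd (crosses_mk_of_lt (by omega)) (key (side sbc (by simp; omega)))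
      · exact mem_insert_self _ _
      · exact absurd (crosses_mk_of_lt (by omega)) (key (side scd (by simp; omega)))
    · exact absurd (crosses_mk_of_lt (by omega)) (key (side sab (by simp; omega)))

theorem exists_flip (hq : T.IsQuad a b c d) :
    ∃ T' : Triangulation n, T'.diags = insert s(a, c) (T.diags.erase s(b, d)) := by
  have hac_compat := hq.compatible_erase
  obtain ⟨hab, hbc, hcd, -⟩ := id hq
  refine ⟨⟨insert s(a, c) (T.diags.erase s(b, d)), ?_, ?_, fun g hg => hq.mem_of_compatible hg⟩,
    rfl⟩
  · simp only [mem_insert, mem_erase]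
    rintro e (rfl | ⟨-, he⟩)
    exacts [isDiag_mk (by omega) (by omega), T.isDiag e he]
  · simp only [mem_insert]
    rintro e₁ (rfl | he₁) e₂ (rfl | he₂)
    · exact fun h => by have := lt_of_crosses_mk h (hab.trans hbc).le (hab.trans hbc).le; omega
    · exact hac_compat e₂ he₂
    · exact fun h => hac_compat e₁ he₁ (crosses_comm h)
    · exact T.noncross e₁ (mem_of_mem_erase he₁) e₂ (mem_of_mem_erase he₂)

end IsQuad

def nbrs (v : Fin n) : Finset (Fin n) :=
  univ.filter fun i => s(v, i) ∈ T.diags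

theorem ncard_diags_mem_eq_card_nbrs (v : Fin n) :
    {e | e ∈ T.diags ∧ v ∈ e}.ncard = (T.nbrs v).card := by
  have : {e | e ∈ T.diags ∧ v ∈ e} = ((T.nbrs v).map (Sym2.mkEmbedding v) : Set _) := by
    ext e
    simp only [Set.mem_ofPred_eq, Sym2.mem_iff_exists, coe_map, Set.mem_image, mem_coe, nbrs,
      mem_filter, mem_univ, true_and, Sym2.mkEmbedding_apply]
    constructor
    · rintro ⟨he, y, rfl⟩
      exact ⟨y, he, rfl⟩
    · rintro ⟨y, hy, rfl⟩
      exact ⟨hy, y, rfl⟩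
  rw [this, Set.ncard_coe_finset, card_map]

section Fan

variable {z : Fin n}

theorem bounds_of_mem_nbrs (hz : z.val = 0) {i : Fin n} (hi : i ∈ T.nbrs z) :
    2 ≤ i.val ∧ i.val ≤ n - 2 := by
  obtain ⟨x, y, he, hxy, hy⟩ := (T.isDiag _ (mem_filter.1 hi).2).exists_eq_mk
  rw [Sym2.eq_iff] at he
  omega

theorem card_nbrs_le (hz : z.val = 0) : (T.nbrs z).card ≤ n - 3 :=
  calc (T.nbrs z).card = ((T.nbrs z).map Fin.valEmbedding).card := (card_map _).symm
    _ ≤ (Icc 2 (n - 2)).card := card_le_card fun t ht => by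
      obtain ⟨i, hi, rfl⟩ := mem_map.1 ht
      exact mem_Icc.2 (T.bounds_of_mem_nbrs hz hi)
    _ = n - 3 := by rw [Nat.card_Icc]; omega

theorem exists_isQuad_of_notMem (hz : z.val = 0) {j : Fin n} (hj₂ : 2 ≤ j.val)
    (hjn : j.val ≤ n - 2) (hj : s(z, j) ∉ T.diags) : ∃ p r q, T.IsQuad z p r q := by
  classical
  obtain ⟨q, hq, hmin⟩ := (univ.filter fun k : Fin n => j < k ∧ IsSide T.diags z k)
    |>.exists_min_image id
      ⟨⟨n - 1, by omega⟩,
        mem_filter.2 ⟨mem_univ _, by simp [Fin.lt_def]; omega, Or.inr (Or.inl ⟨hz, rfl⟩)⟩⟩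
  simp only [mem_filter, mem_univ, true_and] at hq hmin
  obtain ⟨hjq, szq⟩ := hq
  obtain ⟨p, hzp, hpq, szp, spq⟩ := T.exists_apex (a := z) (by omega) szq
  have hpj : p < j := by
    rcases lt_trichotomy p j with h | rfl | h
    · exact h
    · exact absurd (szp.resolve_left (by omega) |>.resolve_left (by omega)) hj
    · exact absurd (hmin p ⟨h, szp⟩) (not_le.2 hpq)
  have hpq_mem : s(p, q) ∈ T.diags := spq.resolve_left (by omega) |>.resolve_left (by omega)
  obtain ⟨r, hpr, hrq, spr, srq⟩ := T.exists_apex (by omega) (Or.inr (Or.inr hpq_mem))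
  exact ⟨p, r, q, hzp, hpr, hrq, szp, spr, srq, szq, hpq_mem⟩

end Fan

end Triangulation

theorem isFlip_of_diags_eq {T T' : Triangulation n} {d d' : Sym2 (Fin n)} (hd : d ∈ T.diags)
    (hne : d' ≠ d) (h : T'.diags = insert d' (T.diags.erase d)) : IsFlip T d T' :=
  ⟨hd, by simp [h, hne.symm], fun e he hed => by simp [h, he, hed]⟩

theorem TnS.adj_of_isFlip {S : Triangulation n} {T T' : TnSVert n S} {d : Sym2 (Fin n)}
    (h : IsFlip T.1 d T'.1) : (TnS n S).Adj T T' :=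
  ⟨fun heq => h.2.1 (heq ▸ h.1), Or.inl ⟨d, h⟩⟩

section Fan

variable {S : Triangulation n} {z o w : Fin n}

theorem exists_adj_card_nbrs_succ (hz : z.val = 0) (ho : o.val = 1) (hw : w.val = n - 1)
    (hS : s(o, w) ∈ S.diags) {T : Triangulation n} (hT : Disjoint T.diags S.diags)
    {j : Fin n} (hj₂ : 2 ≤ j.val) (hjn : j.val ≤ n - 2) (hj : s(z, j) ∉ T.diags) :
    ∃ (T' : Triangulation n) (hT' : Disjoint T'.diags S.diags),
      (TnS n S).Adj ⟨T, hT⟩ ⟨T', hT'⟩ ∧ (T'.nbrs z).card = (T.nbrs z).card + 1 := by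
  obtain ⟨p, r, q, hq⟩ := T.exists_isQuad_of_notMem hz hj₂ hjn hj
  obtain ⟨T', hT'⟩ := hq.exists_flip
  obtain ⟨hzp, hpr, hrq, -, -, -, -, hpq⟩ := hq
  have hzr : s(z, r) ∉ T.diags := T.notMem_of_crosses hpq (crosses_mk_of_lt (by omega))
  have hT'S : Disjoint T'.diags S.diags := by
    rw [hT', disjoint_insert_left]
    exact ⟨S.notMem_of_crosses hS (crosses_mk_of_lt (by omega)),
      hT.mono_left (erase_subset _ _)⟩
  have hflip : IsFlip T s(p, q) T' := isFlip_of_diags_eq hpq (fun h => hzr (by rwa [h])) hT'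
  refine ⟨T', hT'S, TnS.adj_of_isFlip hflip, ?_⟩
  have hnbrs : T'.nbrs z = insert r (T.nbrs z) := by
    ext i
    have : s(z, i) ≠ s(p, q) := by simp; omega
    simp only [Triangulation.nbrs, mem_filter, mem_univ, true_and, mem_insert, hT', mem_erase,
      Sym2.congr_right, ne_eq, this, not_false_eq_true]
  rw [hnbrs, card_insert_of_notMem (by simpa [Triangulation.nbrs] using hzr)]

theorem exists_walk_to_fan (hz : z.val = 0) (ho : o.val = 1) (hw : w.val = n - 1)
    (hS : s(o, w) ∈ S.diags) {Δ : Triangulation n}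
    (hΔ : ∀ e, e ∈ Δ.diags ↔ ∃ i : Fin n, 2 ≤ i.val ∧ i.val ≤ n - 2 ∧ e = s(z, i))
    (hΔS : Disjoint Δ.diags S.diags) (T : Triangulation n) (hT : Disjoint T.diags S.diags) :
    ∃ wk : (TnS n S).Walk ⟨T, hT⟩ ⟨Δ, hΔS⟩, wk.length ≤ n - 3 - (T.nbrs z).card := by
  by_cases hfan : ∀ i : Fin n, 2 ≤ i.val → i.val ≤ n - 2 → s(z, i) ∈ T.diags
  · obtain rfl : Δ = T := Triangulation.eq_of_diags_subset fun e he => by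
      obtain ⟨i, h₂, h₃, rfl⟩ := (hΔ e).1 he
      exact hfan i h₂ h₃
    exact ⟨.nil, Nat.zero_le _⟩
  push Not at hfan
  obtain ⟨j, hj₂, hjn, hj⟩ := hfan
  obtain ⟨T', hT', hadj, hcard⟩ := exists_adj_card_nbrs_succ hz ho hw hS hT hj₂ hjn hj
  have := T'.card_nbrs_le hz
  obtain ⟨wk, hwk⟩ := exists_walk_to_fan hz ho hw hS hΔ hΔS T' hT'
  exact ⟨.cons hadj wk, (SimpleGraph.Walk.length_cons hadj wk).trans_le (by omega)⟩
termination_by n - 3 - (T.nbrs z).card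

end Fan

/-- Let `n ≥ 5`, let `S` be a triangulation of the convex
`n`-gon containing the diagonal `(2, n)` (labels `1,…,n` correspond to
`Fin n` indices `0,…,n-1`, so this is `s(1, n-1)` as indices), and let `Δ` be
the fan triangulation `{(1,i) : 3 ≤ i ≤ n-1}` (indices `s(0, i)` for
`2 ≤ i ≤ n-2`). Then every triangulation `T` disjoint from `S` containing
exactly `d` diagonals of the form `(1, i)` is connected to `Δ` inside the flip
graph `T_n(S)` of triangulations disjoint from `S` by a path of length at most
`n - 3 - d`. -/
theorem fan_reachable_in_TnS (n : ℕ) (hn : 5 ≤ n) (S : Triangulation n)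
    (hS : s((⟨1, by omega⟩ : Fin n), (⟨n - 1, by omega⟩ : Fin n)) ∈ S.diags)
    (Δ : Triangulation n)
    (hΔ : ∀ e, e ∈ Δ.diags ↔
      ∃ i : Fin n, 2 ≤ i.val ∧ i.val ≤ n - 2 ∧ e = s((⟨0, by omega⟩ : Fin n), i))
    (T : Triangulation n) (hT : Disjoint T.diags S.diags)
    (d : ℕ)
    (hd : d = Set.ncard {e | e ∈ T.diags ∧ (⟨0, by omega⟩ : Fin n) ∈ e}) :
    ∃ (hΔS : Disjoint Δ.diags S.diags)
      (w : (TnS n S).Walk ⟨T, hT⟩ ⟨Δ, hΔS⟩), w.length ≤ n - 3 - d := by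
  have hΔS : Disjoint Δ.diags S.diags := disjoint_left.2 fun e he => by
    obtain ⟨i, h₂, h₃, rfl⟩ := (hΔ e).1 he
    exact S.notMem_of_crosses hS (crosses_mk_of_lt (by simp [Fin.lt_def]; omega))
  obtain ⟨wk, hwk⟩ := exists_walk_to_fan rfl rfl rfl hS hΔ hΔS T hT
  exact ⟨hΔS, wk, by rwa [hd, T.ncard_diags_mem_eq_card_nbrs]⟩
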